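/- Let {e^{tL}}_{t≥0} be a quantum dynamical semigroup of unital channels on M_d, let P := span{X ∈ M_d : L(X) = iaX for some a ∈ ℝ}, let N := {Y ∈ M_d : e^{tL}(Y) → 0 as t → ∞}, and let π : M_d → M_d be the projection with range P and kernel N (well-defined since M_d = P ⊕ N). Then for every t ≥ 0 the map β_t := e^{tL} − e^{tL} ∘ π takes values in N, and ‖β_t‖ → 0 as t → ∞. -/

import Mathlib

noncomputable section
open scoped Kronecker
open Filter Topology Matrix

/-- `M_d`, the algebra of `d × d` complex matrices. -/
abbrev Md (d : ℕ) := Matrix (Fin d) (Fin d) ℂ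

/-- `Ad_U : X ↦ U* X U` for a unitary `U`. -/
def adU {d : ℕ} (U : Matrix.unitaryGroup (Fin d) ℂ) : Md d →ₗ[ℂ] Md d where
  toFun X := (U : Md d)ᴴ * X * (U : Md d)
  map_add' X Y := by simp [Matrix.mul_add, Matrix.add_mul]
  map_smul' c X := by simp [Matrix.mul_smul, Matrix.smul_mul]

/-- A linear map is completely positive if it has a Kraus decomposition. -/
def IsCP {d : ℕ} (Φ : Md d →ₗ[ℂ] Md d) : Prop :=
  ∃ (n : ℕ) (V : Fin n → Md d), ∀ X, Φ X = ∑ j, (V j)ᴴ * X * (V j)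

def IsUnital {d : ℕ} (Φ : Md d →ₗ[ℂ] Md d) : Prop := Φ 1 = 1

def IsTracePreserving {d : ℕ} (Φ : Md d →ₗ[ℂ] Md d) : Prop :=
  ∀ X, (Φ X).trace = X.trace

def IsHermitianPreserving {d : ℕ} (Φ : Md d →ₗ[ℂ] Md d) : Prop :=
  ∀ X, Φ Xᴴ = (Φ X)ᴴ

/-- A unital quantum channel: CP, unital and trace-preserving. -/
def IsUnitalChannel {d : ℕ} (Φ : Md d →ₗ[ℂ] Md d) : Prop :=
  IsCP Φ ∧ IsUnital Φ ∧ IsTracePreserving Φ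

/-- A mixed unitary channel: a convex combination of unitary conjugations. -/
def IsMixedUnitary {d : ℕ} (Φ : Md d →ₗ[ℂ] Md d) : Prop :=
  ∃ (ℓ : ℕ) (U : Fin ℓ → Matrix.unitaryGroup (Fin d) ℂ) (lam : Fin ℓ → ℝ),
    (∀ j, 0 ≤ lam j) ∧ (∀ j, lam j ≤ 1) ∧ (∑ j, lam j = 1) ∧
    Φ = ∑ j, (lam j : ℂ) • adU (U j)

/-- The Choi matrix `J(Φ) = (1/d) ∑_{i,j} E_{ij} ⊗ Φ(E_{ij})`. -/
def choi {d : ℕ} (Φ : Md d →ₗ[ℂ] Md d) : Matrix (Fin d × Fin d) (Fin d × Fin d) ℂ :=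
  (d : ℂ)⁻¹ • ∑ i : Fin d, ∑ j : Fin d,
    (Matrix.single i j (1 : ℂ)) ⊗ₖ Φ (Matrix.single i j (1 : ℂ))

/-- `⟨Φ, Ψ⟩ = tr(J(Φ)* J(Ψ))`; this is a real number whenever `Φ, Ψ` are
Hermitian-preserving, so we record its real part. -/
def pairRe {d : ℕ} (Φ Ψ : Md d →ₗ[ℂ] Md d) : ℝ := (((choi Φ)ᴴ * choi Ψ).trace).re

/-- The Hilbert–Schmidt (Choi) norm `‖Φ‖₂ = tr(J(Φ)* J(Φ))^{1/2}`. -/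
def hsNorm {d : ℕ} (Φ : Md d →ₗ[ℂ] Md d) : ℝ := Real.sqrt (pairRe Φ Φ)

attribute [local instance] Matrix.normedAddCommGroup Matrix.normedSpace

/-- The exponential `e^{tL}` of a linear map `L` on `M_d`. -/
def expL {d : ℕ} (L : Md d →ₗ[ℂ] Md d) (t : ℝ) : Md d →ₗ[ℂ] Md d :=
  haveI : IsTopologicalRing (Md d →L[ℂ] Md d) :=
    @NonUnitalSeminormedRing.toIsTopologicalRing _
      (ContinuousLinearMap.toNormedRing (𝕜 := ℂ) (E := Md d)).toNonUnitalNormedRing.toNonUnitalSeminormedRing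
  ((NormedSpace.exp ((t : ℂ) • (LinearMap.toContinuousLinearMap L)) :
      Md d →L[ℂ] Md d)).toLinearMap

/-- `P = span{X : L X = i a X for some real a}`. -/
def periphGen {d : ℕ} (L : Md d →ₗ[ℂ] Md d) : Submodule ℂ (Md d) :=
  Submodule.span ℂ {X : Md d | ∃ a : ℝ, L X = ((a : ℂ) * Complex.I) • X}

/-- `N = {Y : e^{tL} Y → 0 as t → ∞}`. -/
def decaySet {d : ℕ} (L : Md d →ₗ[ℂ] Md d) : Set (Md d) :=
  {Y : Md d | Filter.Tendsto (fun t : ℝ => expL L t Y) atTop (nhds 0)}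

/-! Since `π` fixes its range, `π (X - π X) = 0`, so `X - π X` lies in the decay set `N`, and
`β_t X = e^{tL} (X - π X)`. The semigroup law `e^{(s+t)L} = e^{sL} ∘ e^{tL}` makes `N` invariant
under every `e^{tL}`. The Choi matrix of `β_t` is a fixed linear combination of the matrices `β_t E_{ij}`,
each of which tends to `0`, so the Hilbert–Schmidt norm of `β_t` tends to `0`. -/

section Semigroup

variable {d : ℕ}

set_option linter.style.haveILetI false in
theorem expL_add (L : Md d →ₗ[ℂ] Md d) (s t : ℝ) :
    expL L (s + t) = expL L s ∘ₗ expL L t := by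
  -- These must be `letI` so that they unfold to the Banach algebra structure fixed in `expL`.
  letI : NormedRing (Md d →L[ℂ] Md d) := ContinuousLinearMap.toNormedRing
  letI : NormedAlgebra ℂ (Md d →L[ℂ] Md d) := ContinuousLinearMap.toNormedAlgebra
  letI : NormedAlgebra ℚ (Md d →L[ℂ] Md d) := NormedAlgebra.restrictScalars ℚ ℂ _
  have hcomplete : CompleteSpace (Md d →L[ℂ] Md d) := FiniteDimensional.complete ℂ _
  have hc : Commute ((s : ℂ) • L.toContinuousLinearMap) ((t : ℂ) • L.toContinuousLinearMap) := by
    show _ = _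
    ext X : 1
    simp only [mul_apply_eq_comp, _root_.smul_apply, map_smul, smul_smul, mul_comm]
  have hst : ((s + t : ℝ) : ℂ) • L.toContinuousLinearMap
      = (s : ℂ) • L.toContinuousLinearMap + (t : ℂ) • L.toContinuousLinearMap := by
    push_cast
    exact add_smul (s : ℂ) t L.toContinuousLinearMap
  simp only [expL, hst]
  exact congrArg ContinuousLinearMap.toLinearMap
    (@NormedSpace.exp_add_of_commute _ _ _ hcomplete _ _ hc)

theorem expL_apply_mem_decaySet {L : Md d →ₗ[ℂ] Md d} {Y : Md d} (hY : Y ∈ decaySet L)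
    (t : ℝ) : expL L t Y ∈ decaySet L := by
  have hshift : (fun s : ℝ => expL L s (expL L t Y)) = fun s => expL L (s + t) Y := by
    ext1 s
    rw [expL_add, LinearMap.comp_apply]
  simpa only [decaySet, Set.mem_ofPred_eq, hshift, Function.comp_def, id] using
    hY.comp (tendsto_atTop_add_const_right atTop t tendsto_id)

end Semigroup

theorem Continuous.matrix_kronecker {X R l m n p : Type*} [TopologicalSpace X]
    [TopologicalSpace R] [Mul R] [ContinuousMul R] {A : X → Matrix l m R} {B : X → Matrix n p R}
    (hA : Continuous A) (hB : Continuous B) : Continuous fun x => A x ⊗ₖ B x :=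
  continuous_matrix fun _ _ => (hA.matrix_elem _ _).mul (hB.matrix_elem _ _)

section ChoiNorm

variable {d : ℕ} {ι : Type*} {l : Filter ι} {Φ : ι → Md d →ₗ[ℂ] Md d}

theorem tendsto_choi_zero (hΦ : ∀ X, Tendsto (fun i => Φ i X) l (𝓝 0)) :
    Tendsto (fun i => choi (Φ i)) l (𝓝 0) := by
  have hkron (A : Md d) {f : ι → Md d} (hf : Tendsto f l (𝓝 0)) :
      Tendsto (fun i => A ⊗ₖ f i) l (𝓝 0) := by
    simpa [Function.comp_def] using
      ((continuous_const.matrix_kronecker continuous_id).tendsto 0).comp hf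
  simpa [choi] using (tendsto_finsetSum _ fun i _ => tendsto_finsetSum _ fun j _ =>
    hkron (single i j 1) (hΦ (single i j 1))).const_smul ((d : ℂ)⁻¹)

theorem tendsto_hsNorm_zero (hΦ : ∀ X, Tendsto (fun i => Φ i X) l (𝓝 0)) :
    Tendsto (fun i => hsNorm (Φ i)) l (𝓝 0) := by
  have hcont : Continuous fun M : Matrix (Fin d × Fin d) (Fin d × Fin d) ℂ =>
      Real.sqrt (Mᴴ * M).trace.re :=
    Real.continuous_sqrt.comp (Complex.continuous_re.comp
      ((continuous_id.matrix_conjTranspose.matrix_mul continuous_id).matrix_trace))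
  simpa [hsNorm, pairRe, Function.comp_def] using (hcont.tendsto 0).comp (tendsto_choi_zero hΦ)

end ChoiNorm

theorem stmt_10_general (d : ℕ) (L : Md d →ₗ[ℂ] Md d)
    (π : Md d →ₗ[ℂ] Md d)
    (hrange : ∀ X, π X ∈ periphGen L)
    (hfix : ∀ X ∈ periphGen L, π X = X)
    (hker : ∀ X : Md d, π X = 0 ↔ X ∈ decaySet L) :
    (∀ t : ℝ, 0 ≤ t → ∀ X : Md d, expL L t X - expL L t (π X) ∈ decaySet L) ∧
    Filter.Tendsto (fun t : ℝ => hsNorm (expL L t - expL L t ∘ₗ π)) atTop (nhds 0) := by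
  have hdecay (X : Md d) : X - π X ∈ decaySet L :=
    (hker _).1 (by rw [map_sub, hfix _ (hrange X), sub_self])
  refine ⟨fun t _ X => ?_, tendsto_hsNorm_zero fun X => ?_⟩
  · simpa only [map_sub] using expL_apply_mem_decaySet (hdecay X) t
  · simpa only [decaySet, Set.mem_ofPred_eq, map_sub, LinearMap.sub_apply, LinearMap.comp_apply]
      using hdecay X

/-- let `π` be the projection with range `P` and kernel `N`.  Then
`β_t = e^{tL} - e^{tL} ∘ π` takes values in `N` and `‖β_t‖ → 0` as `t → ∞`. -/
theorem stmt_10 (d : ℕ) (L : Md d →ₗ[ℂ] Md d)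
    (h : ∀ t : ℝ, 0 ≤ t → IsUnitalChannel (expL L t))
    (π : Md d →ₗ[ℂ] Md d)
    (hrange : ∀ X, π X ∈ periphGen L)
    (hfix : ∀ X ∈ periphGen L, π X = X)
    (hker : ∀ X : Md d, π X = 0 ↔ X ∈ decaySet L) :
    (∀ t : ℝ, 0 ≤ t → ∀ X : Md d, expL L t X - expL L t (π X) ∈ decaySet L) ∧
    Filter.Tendsto (fun t : ℝ => hsNorm (expL L t - expL L t ∘ₗ π)) atTop (nhds 0) :=
  stmt_10_general d L π hrange hfix hker
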